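/- Let α be a composition of N with r ≥ 1 parts which is not all-ones (so N > r), and let k ≥ r. Then a_{n,k}^α / k^n converges to 2^{k−r} / (k^N · (k−r)!) as n → ∞, where a_{n,k}^α is the number of saturated chains in 𝔑 starting at α and ending at a composition of n with k parts. -/

import Mathlib

/-!
A saturated chain from `β` is `β` followed by a saturated chain from one of its upper covers.
If `β` has `ℓ` parts and is not all-ones, its upper covers are pairwise distinct: `ℓ` of them
have width `ℓ` and two have width `ℓ + 1`, and none of them is all-ones. Hence the number of
chains of `m` steps from `α` to width `k` is `g m r`, where `g 0 ℓ = [ℓ = k]` and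
`g (m + 1) ℓ = ℓ * g m ℓ + 2 * g m (ℓ + 1)`. Divided by `k ^ m`, this is a linear recurrence
with contraction factor `ℓ / k < 1` for `ℓ < k`, so downward induction on `ℓ` gives
`g m ℓ / k ^ m → 2 ^ (k - ℓ) / (k - ℓ)!`; finally `a_{n,k}^α = g (n - N) r`.
-/

/-- A composition: a finite list of positive integers. -/
def IsComposition (P : List ℕ) : Prop := ∀ x ∈ P, 0 < x

/-- Covering relation of the poset 𝔑: prepend a part 1, append a part 1,
or increase one part by 1. -/
def coverN (P Q : List ℕ) : Prop :=
  Q = 1 :: P ∨ Q = P ++ [1] ∨ ∃ j, j < P.length ∧ Q = P.set j (P.getD j 0 + 1)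

/-- `ank cover α n k` is the number of saturated chains (with respect to `cover`)
starting at `α` and ending at a composition of `n` with `k` parts. -/
noncomputable def ank (cover : List ℕ → List ℕ → Prop) (α : List ℕ) (n k : ℕ) : ℕ :=
  Nat.card {c : List (List ℕ) //
    c.Chain' cover ∧ c.head? = some α ∧
      ∃ Q, c.getLast? = some Q ∧ Q.sum = n ∧ Q.length = k}

/-- The generating function `L_k^α(t) = Σ_n a_{n,k}^α t^n`. -/
noncomputable def Lser (cover : List ℕ → List ℕ → Prop) (α : List ℕ) (k : ℕ) :
    PowerSeries ℤ :=
  PowerSeries.mk fun n => (ank cover α n k : ℤ)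

open Filter Topology

section LinearRecurrence

variable {𝕜 : Type*} [NormedField 𝕜] {a : 𝕜}

lemma tendsto_zero_of_eq_mul_add {v e : ℕ → 𝕜} (ha : ‖a‖ < 1)
    (he : Tendsto e atTop (𝓝 0)) (hv : ∀ m, v (m + 1) = a * v m + e m) :
    Tendsto v atTop (𝓝 0) := by
  rw [NormedAddGroup.tendsto_nhds_zero] at he ⊢
  intro ε hε
  obtain ⟨M, hM⟩ := eventually_atTop.1 (he (ε * (1 - ‖a‖) / 2) (by nlinarith))
  -- the errors `e m`, `m ≥ M`, accumulate to at most `ε / 2` under the contraction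
  have bound : ∀ t, ‖v (M + t)‖ ≤ ‖a‖ ^ t * ‖v M‖ + ε / 2 := by
    intro t
    induction t with
    | zero => simp only [add_zero, pow_zero, one_mul]; linarith
    | succ t ih =>
      calc ‖v (M + (t + 1))‖ = ‖a * v (M + t) + e (M + t)‖ := by rw [← add_assoc, hv]
        _ ≤ ‖a‖ * ‖v (M + t)‖ + ε * (1 - ‖a‖) / 2 := by
          grw [norm_add_le, norm_mul, hM (M + t) (by omega)]
        _ ≤ ‖a‖ * (‖a‖ ^ t * ‖v M‖ + ε / 2) + ε * (1 - ‖a‖) / 2 := by gcongr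
        _ = ‖a‖ ^ (t + 1) * ‖v M‖ + ε / 2 := by ring
  have hgeom : Tendsto (fun t => ‖a‖ ^ t * ‖v M‖) atTop (𝓝 0) := by
    simpa using (tendsto_pow_atTop_nhds_zero_of_lt_one (norm_nonneg a) ha).mul_const ‖v M‖
  obtain ⟨T, hT⟩ := eventually_atTop.1 (hgeom.eventually_lt_const (half_pos hε))
  filter_upwards [eventually_ge_atTop (M + T)] with n hn
  obtain ⟨t, rfl⟩ := Nat.exists_eq_add_of_le (show M ≤ n by omega)
  linarith [bound t, hT t (by omega)]

lemma tendsto_of_eq_mul_add {u w : ℕ → 𝕜} {L : 𝕜} (ha : ‖a‖ < 1)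
    (hw : Tendsto w atTop (𝓝 L)) (hu : ∀ m, u (m + 1) = a * u m + w m) :
    Tendsto u atTop (𝓝 (L / (1 - a))) := by
  have ha₁ : 1 - a ≠ 0 := fun h => by
    rw [← sub_eq_zero.1 h, norm_one] at ha
    exact lt_irrefl 1 ha
  have hv : Tendsto (fun m => u m - L / (1 - a)) atTop (𝓝 0) := by
    refine tendsto_zero_of_eq_mul_add ha (e := fun m => w m - L) (by simpa using hw.sub_const L)
      fun m => ?_
    rw [hu m]
    field_simp
    ring
  simpa using hv.add_const (L / (1 - a))

end LinearRecurrence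

lemma List.eq_replicate_of_cons_eq_append_singleton {α : Type*} {a : α} :
    ∀ {l : List α}, a :: l = l ++ [a] → l = List.replicate l.length a
  | [], _ => rfl
  | b :: t, h => by
    obtain ⟨rfl, ht⟩ := List.cons_eq_cons.1 h
    rw [List.length_cons, List.replicate_succ, ← List.eq_replicate_of_cons_eq_append_singleton ht]

lemma List.sum_set_getD_add_one : ∀ (P : List ℕ) {j : ℕ}, j < P.length →
    (P.set j (P.getD j 0 + 1)).sum = P.sum + 1
  | [], _, h => absurd h (Nat.not_lt_zero _)
  | a :: t, 0, _ => by simp only [List.set_cons_zero, List.getD_cons_zero, List.sum_cons]; omega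
  | a :: t, j + 1, h => by
    simp only [List.set_cons_succ, List.getD_cons_succ, List.sum_cons,
      List.sum_set_getD_add_one t (Nat.lt_of_succ_lt_succ h)]
    omega

section Chains

variable {cover : List ℕ → List ℕ → Prop} {β : List ℕ} {n k : ℕ}

def SatChain (cover : List ℕ → List ℕ → Prop) (β : List ℕ) (n k : ℕ) : Type :=
  {c : List (List ℕ) // c.IsChain cover ∧ c.head? = some β ∧
    ∃ Q, c.getLast? = some Q ∧ Q.sum = n ∧ Q.length = k}

lemma ank_eq_card_satChain : ank cover β n k = Nat.card (SatChain cover β n k) := rfl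

lemma SatChain.val_eq_singleton (hcover : ∀ P Q, cover P Q → P.sum < Q.sum)
    (c : SatChain cover β β.sum k) : c.1 = [β] := by
  obtain ⟨c, hc, hh, Q, hl, hQ, -⟩ := c
  obtain ⟨t, rfl⟩ := List.head?_eq_some_iff.1 hh
  cases t with
  | nil => rfl
  | cons γ t =>
    rw [List.isChain_cons_cons] at hc
    rw [List.getLast?_cons_cons] at hl
    have := List.IsChain.induction (fun P => β.sum < P.sum) _ hc.2
      (fun P P' h hP => hP.trans (hcover P P' h)) (fun _ => hcover β γ hc.1) Q
      (List.mem_of_getLast? hl)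
    exact absurd (hQ ▸ this) (lt_irrefl _)

lemma card_satChain_self (hcover : ∀ P Q, cover P Q → P.sum < Q.sum) :
    Finite (SatChain cover β β.sum k) ∧
      Nat.card (SatChain cover β β.sum k) = if β.length = k then 1 else 0 := by
  have : Subsingleton (SatChain cover β β.sum k) :=
    ⟨fun c c' => Subtype.ext <|
      (c.val_eq_singleton hcover).trans (c'.val_eq_singleton hcover).symm⟩
  refine ⟨Finite.of_subsingleton, ?_⟩
  split_ifs with hk
  · have : Nonempty (SatChain cover β β.sum k) :=
      ⟨⟨[β], List.isChain_singleton β, rfl, β, rfl, rfl, hk⟩⟩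
    exact Nat.card_unique
  · have : IsEmpty (SatChain cover β β.sum k) := ⟨fun c => by
      obtain ⟨Q, hl, -, hQ⟩ := c.2.2.2
      rw [c.val_eq_singleton hcover, List.getLast?_singleton, Option.some_inj] at hl
      exact hk (hl ▸ hQ)⟩
    exact Nat.card_of_isEmpty

def SatChain.cons (p : Σ γ : {γ // cover β γ}, SatChain cover γ.1 n k) :
    SatChain cover β n k :=
  ⟨β :: p.2.1, by
    obtain ⟨⟨γ, hγ⟩, c, hc, hh, Q, hl, hQ⟩ := p
    obtain ⟨t, rfl⟩ := List.head?_eq_some_iff.1 hh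
    rw [← List.getLast?_cons_cons (a := β)] at hl
    exact ⟨List.isChain_cons_cons.2 ⟨hγ, hc⟩, rfl, Q, hl, hQ⟩⟩

lemma SatChain.cons_bijective (hβ : ¬(β.sum = n ∧ β.length = k)) :
    Function.Bijective (SatChain.cons (cover := cover) (β := β) (n := n) (k := k)) := by
  constructor
  · rintro ⟨⟨γ, hγ⟩, c, hc⟩ ⟨⟨γ', hγ'⟩, c', hc'⟩ h
    obtain rfl : c = c' := List.cons_injective (congrArg Subtype.val h)
    obtain rfl : γ = γ' := Option.some_injective _ (hc.2.1.symm.trans hc'.2.1)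
    rfl
  · rintro ⟨c, hc, hh, Q, hl, hQ⟩
    obtain ⟨t, rfl⟩ := List.head?_eq_some_iff.1 hh
    cases t with
    | nil =>
      rw [List.getLast?_singleton, Option.some_inj] at hl
      exact (hβ (hl ▸ hQ)).elim
    | cons γ t =>
      rw [List.isChain_cons_cons] at hc
      rw [List.getLast?_cons_cons] at hl
      exact ⟨⟨⟨γ, hc.1⟩, γ :: t, hc.2, rfl, Q, hl, hQ⟩, rfl⟩

end Chains

section UpperCovers

lemma coverN_sum {P Q : List ℕ} (h : coverN P Q) : Q.sum = P.sum + 1 := by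
  rcases h with rfl | rfl | ⟨j, hj, rfl⟩
  · rw [List.sum_cons, add_comm]
  · rw [List.sum_append, List.sum_singleton]
  · exact List.sum_set_getD_add_one P hj

variable (β : List ℕ)

def upperCover : Fin β.length ⊕ Bool → List ℕ
  | .inl j => β.set j (β.getD j 0 + 1)
  | .inr true => 1 :: β
  | .inr false => β ++ [1]

lemma coverN_upperCover : ∀ x, coverN β (upperCover β x)
  | .inl j => Or.inr (Or.inr ⟨j, j.2, rfl⟩)
  | .inr true => Or.inl rfl
  | .inr false => Or.inr (Or.inl rfl)

lemma length_upperCover_inl (j : Fin β.length) : (upperCover β (.inl j)).length = β.length :=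
  List.length_set

lemma length_upperCover_inr (b : Bool) : (upperCover β (.inr b)).length = β.length + 1 := by
  cases b
  · exact List.length_append
  · exact List.length_cons

lemma upperCover_injective (hβ : β.length < β.sum) : Function.Injective (upperCover β) := by
  have length_ne (j : Fin β.length) (b : Bool) :
      upperCover β (.inl j) ≠ upperCover β (.inr b) :=
    fun h => by simpa [length_upperCover_inl, length_upperCover_inr] using congrArg List.length h
  -- `1 :: β = β ++ [1]` only for all-ones `β`, whose weight is its width
  have cons_ne_append : 1 :: β ≠ β ++ [1] := fun h => by
    have := congrArg List.sum (List.eq_replicate_of_cons_eq_append_singleton h)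
    rw [List.sum_replicate, smul_eq_mul, mul_one] at this
    omega
  rintro (j | b) (j' | b') h
  · by_contra hne
    have hjj : (j' : ℕ) ≠ j := fun h' => hne (congrArg _ (Fin.ext h'.symm))
    have := congrArg (·[j]?) h
    simp [upperCover, hjj] at this
  · exact (length_ne j b' h).elim
  · exact (length_ne j' b h.symm).elim
  · cases b <;> cases b'
    · rfl
    · exact (cons_ne_append h.symm).elim
    · exact (cons_ne_append h).elim
    · rfl

lemma exists_upperCover_eq {γ : List ℕ} (h : coverN β γ) : ∃ x, upperCover β x = γ := by
  rcases h with rfl | rfl | ⟨j, hj, rfl⟩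
  · exact ⟨.inr true, rfl⟩
  · exact ⟨.inr false, rfl⟩
  · exact ⟨.inl ⟨j, hj⟩, rfl⟩

noncomputable def upperCoverEquiv (hβ : β.length < β.sum) :
    Fin β.length ⊕ Bool ≃ {γ // coverN β γ} :=
  Equiv.ofBijective (fun x => ⟨upperCover β x, coverN_upperCover β x⟩)
    ⟨fun _ _ h => upperCover_injective β hβ (congrArg Subtype.val h),
      fun ⟨_, hγ⟩ => (exists_upperCover_eq β hγ).imp fun _ hx => Subtype.ext hx⟩

end UpperCovers

def chainCount (k : ℕ) : ℕ → ℕ → ℕ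
  | 0, ℓ => if ℓ = k then 1 else 0
  | m + 1, ℓ => ℓ * chainCount k m ℓ + 2 * chainCount k m (ℓ + 1)

lemma card_satChain_coverN (k m : ℕ) : ∀ β : List ℕ, β.length < β.sum →
    Finite (SatChain coverN β (β.sum + m) k) ∧
      Nat.card (SatChain coverN β (β.sum + m) k) = chainCount k m β.length := by
  induction m with
  | zero =>
    exact fun β _ => card_satChain_self fun P Q h => (coverN_sum h).symm ▸ Nat.lt_succ_self _
  | succ m ih =>
    intro β hβ
    have hcover (x) : Finite (SatChain coverN (upperCover β x) (β.sum + (m + 1)) k) ∧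
        Nat.card (SatChain coverN (upperCover β x) (β.sum + (m + 1)) k) =
          chainCount k m (upperCover β x).length := by
      have hsum := coverN_sum (coverN_upperCover β x)
      have hlen : (upperCover β x).length ≤ β.length + 1 := by
        rcases x with j | b
        · exact (length_upperCover_inl β j).trans_le (Nat.le_succ _)
        · exact (length_upperCover_inr β b).le
      rw [show β.sum + (m + 1) = (upperCover β x).sum + m by omega]
      exact ih _ (by omega)
    have e : SatChain coverN β (β.sum + (m + 1)) k ≃
        Σ x, SatChain coverN (upperCover β x) (β.sum + (m + 1)) k :=
      (Equiv.ofBijective _ (SatChain.cons_bijective (by omega))).symm.trans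
        (Equiv.sigmaCongrLeft (upperCoverEquiv β hβ)).symm
    have : ∀ x, Finite (SatChain coverN (upperCover β x) (β.sum + (m + 1)) k) :=
      fun x => (hcover x).1
    refine ⟨Finite.of_equiv _ e.symm, ?_⟩
    rw [Nat.card_congr e, Nat.card_sigma, Fintype.sum_sum_type, Fintype.sum_bool]
    simp only [hcover, length_upperCover_inl, length_upperCover_inr, Finset.sum_const,
      Finset.card_univ, Fintype.card_fin, smul_eq_mul, chainCount]
    ring

lemma chainCount_eq_zero_of_lt {k ℓ : ℕ} (h : k < ℓ) : ∀ m, chainCount k m ℓ = 0 := by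
  intro m
  induction m generalizing ℓ with
  | zero => simp [chainCount, h.ne']
  | succ m ih => simp [chainCount, ih h, ih (h.trans (Nat.lt_succ_self ℓ))]

lemma chainCount_self (k m : ℕ) : chainCount k m k = k ^ m := by
  induction m with
  | zero => simp [chainCount]
  | succ m ih => rw [chainCount, ih, chainCount_eq_zero_of_lt (Nat.lt_succ_self k)]; ring

lemma tendsto_chainCount_div_pow {k : ℕ} (hk : 0 < k) : ∀ d ℓ, ℓ + d = k →
    Tendsto (fun m => (chainCount k m ℓ : ℝ) / k ^ m) atTop (𝓝 (2 ^ d / d.factorial)) := by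
  have hk' : (0 : ℝ) < k := Nat.cast_pos.2 hk
  intro d
  induction d with
  | zero =>
    intro ℓ hℓ
    obtain rfl : ℓ = k := hℓ
    simp [chainCount_self, hk'.ne']
  | succ d ih =>
    intro ℓ hℓ
    have hrec (m : ℕ) : (chainCount k (m + 1) ℓ : ℝ) / k ^ (m + 1) =
        ℓ / k * ((chainCount k m ℓ : ℝ) / k ^ m) +
          2 / k * ((chainCount k m (ℓ + 1) : ℝ) / k ^ m) := by
      rw [chainCount]
      push_cast
      field_simp
      ring
    have hcontr : ‖(ℓ : ℝ) / k‖ < 1 := by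
      rw [Real.norm_of_nonneg (by positivity), div_lt_one hk']
      exact_mod_cast (show ℓ < k by omega)
    convert tendsto_of_eq_mul_add (u := fun m => (chainCount k m ℓ : ℝ) / k ^ m) hcontr
      ((ih (ℓ + 1) (by omega)).const_mul (2 / (k : ℝ))) hrec using 2
    have hℓ' : (ℓ : ℝ) + (d + 1) = k := by exact_mod_cast hℓ
    rw [Nat.factorial_succ, ← hℓ']
    push_cast
    field_simp
    ring

lemma IsComposition.length_lt_sum {P : List ℕ} (hP : IsComposition P) (h : ∃ a ∈ P, a ≠ 1) :
    P.length < P.sum := by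
  have := List.sum_lt_sum (fun _ => 1) id (fun i hi => hP i hi)
    (h.imp fun a ⟨ha, h1⟩ => ⟨ha, by have := hP a ha; simp only [id]; omega⟩)
  simpa using this

theorem stmt11 (α : List ℕ) (hα : IsComposition α) (N r : ℕ) (hN : α.sum = N)
    (hr : α.length = r) (hr1 : 1 ≤ r) (hno : ¬ ∀ a ∈ α, a = 1)
    (k : ℕ) (hk : r ≤ k) :
    Filter.Tendsto (fun n => (ank coverN α n k : ℝ) / (k : ℝ) ^ n) Filter.atTop
      (nhds ((2 : ℝ) ^ (k - r) / ((k : ℝ) ^ N * (Nat.factorial (k - r) : ℝ)))) := by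
  have hα' : α.length < α.sum := hα.length_lt_sum (by simpa using hno)
  have hcount (n : ℕ) (hn : N ≤ n) : ank coverN α n k = chainCount k (n - N) r := by
    have := (card_satChain_coverN k (n - N) α hα').2
    rwa [hN, Nat.add_sub_cancel' hn, hr, ← ank_eq_card_satChain] at this
  have hlim := ((tendsto_chainCount_div_pow (k := k) (by omega) (k - r) r (by omega)).comp
    (tendsto_sub_atTop_nat N)).div_const ((k : ℝ) ^ N)
  rw [div_div, mul_comm] at hlim
  refine hlim.congr' ?_
  filter_upwards [eventually_ge_atTop N] with n hn
  rw [Function.comp_apply, hcount n hn, div_div, ← pow_add, Nat.sub_add_cancel hn]
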